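/- arXiv:2201.05175 — 2 statements merged into one kernel-verified Lean document; each statement's English description precedes it below -/
import Mathlib

section
/- Every regular extremal translation-invariant stationary (ETIS) state μ of the F-SSEP has a definite density: there exists ρ ∈ [0,1] such that μ has density ρ. Moreover, μ(F) = 0 or μ(F) = 1, where F is the set of frozen configurations. -/
open MeasureTheory Filter
open scoped ENNReal

attribute [local instance] Classical.propDecidable

noncomputable section
namespace FSSEPPaper

/-- Configuration space of the F-SSEP. -/
abbrev X : Type := ℤ → Bool
/-- Configuration space of the SSM (stack model). -/
abbrev XS : Type := ℤ → ℕ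
/-- Parity sequences. -/
abbrev PS : Type := ℤ → Bool

/-- The `(m+1)`-st binary digit of `x`. -/
def rbit (m : ℕ) (x : ℝ) : Bool := decide (⌊x * 2 ^ (m + 1)⌋ % 2 = 1)

/-- The i.i.d. fair-coin product measure on `ℤ → Bool`, realized through the binary
digits of a uniform random number in `(0,1)`. -/
def coin : Measure (ℤ → Bool) :=
  (volume.restrict (Set.Ioo (0:ℝ) 1)).map (fun x (i : ℤ) => rbit (Encodable.encode i) x)

/-! ### F-SSEP dynamics -/

/-- `wantsR η i`: the particle at `i` attempts to jump to the right. -/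
def wantsR (η : X) (i : ℤ) : Bool := η i && η (i - 1) && !η (i + 1)
/-- `wantsL η i`: the particle at `i` attempts to jump to the left. -/
def wantsL (η : X) (i : ℤ) : Bool := η i && η (i + 1) && !η (i - 1)
/-- The particle at `i` jumps to the right (the coin at the target site resolves conflicts). -/
def jumpsR (η : X) (α : ℤ → Bool) (i : ℤ) : Bool :=
  wantsR η i && (!(wantsL η (i + 2)) || α (i + 1))
/-- The particle at `i` jumps to the left. -/
def jumpsL (η : X) (α : ℤ → Bool) (i : ℤ) : Bool :=
  wantsL η i && (!(wantsR η (i - 2)) || !(α (i - 1)))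
/-- One synchronous step of the F-SSEP given the coin field `α`. -/
def fstep (η : X) (α : ℤ → Bool) : X := fun i =>
  (η i && !(jumpsR η α i) && !(jumpsL η α i)) || jumpsR η α (i - 1) || jumpsL η α (i + 1)

/-- The transition kernel of the F-SSEP. -/
def QF (η : X) : Measure X := coin.map (fstep η)

/-! ### SSM dynamics -/

/-- Net rightward particle flow across the bond `⟨k,k+1⟩` given the coin field `α`. -/
def flow (n : XS) (α : ℤ → Bool) (k : ℤ) : ℤ :=
  if 2 ≤ n k then (if 2 ≤ n (k + 1) then (if α k then 1 else -1) else 1)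
  else (if 2 ≤ n (k + 1) then -1 else 0)
/-- One synchronous step of the SSM given the coin field `α`. -/
def sstep (n : XS) (α : ℤ → Bool) : XS := fun i =>
  ((n i : ℤ) + flow n α (i - 1) - flow n α i).toNat

/-- The transition kernel of the SSM. -/
def QS (n : XS) : Measure XS := coin.map (sstep n)

/-! ### Shifts and classes of measures -/

/-- The shift `τ` on sequences of Booleans: `(τη)(i) = η(i-1)`. -/
def shf (η : ℤ → Bool) : ℤ → Bool := fun i => η (i - 1)
/-- The shift `τ` on stack configurations. -/
def shs (n : XS) : XS := fun i => n (i - 1)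

/-- Translation-invariant probability measure on `X`. -/
def TIF (μ : Measure X) : Prop := IsProbabilityMeasure μ ∧ μ.map shf = μ
/-- Translation-invariant stationary state of the F-SSEP. -/
def TISF (μ : Measure X) : Prop := TIF μ ∧ μ.bind QF = μ
/-- Ergodic translation-invariant measure on `X` (extreme point of the TI measures). -/
def ErgF (μ : Measure X) : Prop := TIF μ ∧ ∀ μ₁ μ₂ : Measure X, TIF μ₁ → TIF μ₂ →
  ∀ p : ℝ≥0∞, 0 < p → p < 1 → μ = p • μ₁ + (1 - p) • μ₂ → μ₁ = μ
/-- Extremal translation-invariant stationary state of the F-SSEP. -/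
def ETISF (μ : Measure X) : Prop := TISF μ ∧ ∀ μ₁ μ₂ : Measure X, TISF μ₁ → TISF μ₂ →
  ∀ p : ℝ≥0∞, 0 < p → p < 1 → μ = p • μ₁ + (1 - p) • μ₂ → μ₁ = μ
/-- A measure on `X` is regular if the all-ones configuration carries no mass. -/
def RegF (μ : Measure X) : Prop := μ {η : X | ∀ i, η i = true} = 0

/-- Translation-invariant probability measure on `X̂`. -/
def TI_S (μ : Measure XS) : Prop := IsProbabilityMeasure μ ∧ μ.map shs = μ
/-- Translation-invariant stationary state of the SSM. -/
def TIS_S (μ : Measure XS) : Prop := TI_S μ ∧ μ.bind QS = μ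
/-- Ergodic translation-invariant measure on `X̂`. -/
def Erg_S (μ : Measure XS) : Prop := TI_S μ ∧ ∀ μ₁ μ₂ : Measure XS, TI_S μ₁ → TI_S μ₂ →
  ∀ p : ℝ≥0∞, 0 < p → p < 1 → μ = p • μ₁ + (1 - p) • μ₂ → μ₁ = μ
/-- Extremal translation-invariant stationary state of the SSM. -/
def ETIS_S (μ : Measure XS) : Prop := TIS_S μ ∧ ∀ μ₁ μ₂ : Measure XS, TIS_S μ₁ → TIS_S μ₂ →
  ∀ p : ℝ≥0∞, 0 < p → p < 1 → μ = p • μ₁ + (1 - p) • μ₂ → μ₁ = μ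
/-- A measure on `X̂` is regular if the expected stack height at the origin is finite. -/
def Reg_S (μ : Measure XS) : Prop := ∫⁻ n, (n 0 : ℝ≥0∞) ∂μ ≠ ⊤

/-! ### Densities -/

/-- `μ` has density `ρ`: a.s. both one-sided Cesàro averages of the configuration equal `ρ`. -/
def densF (μ : Measure X) (ρ : ℝ) : Prop :=
  ∀ᵐ η ∂μ,
    Tendsto (fun N : ℕ => (∑ i ∈ Finset.range N, (if η ((i : ℤ) + 1) then (1:ℝ) else 0)) / (N : ℝ))
      atTop (nhds ρ) ∧
    Tendsto (fun N : ℕ => (∑ i ∈ Finset.range N, (if η (-(i : ℤ) - 1) then (1:ℝ) else 0)) / (N : ℝ))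
      atTop (nhds ρ)

/-- `μ` has density `ρ̂`: a.s. both one-sided Cesàro averages of the stack heights equal `ρ̂`. -/
def densS (μ : Measure XS) (ρ : ℝ) : Prop :=
  ∀ᵐ n ∂μ,
    Tendsto (fun N : ℕ => (∑ i ∈ Finset.range N, (n ((i : ℤ) + 1) : ℝ)) / (N : ℝ)) atTop (nhds ρ) ∧
    Tendsto (fun N : ℕ => (∑ i ∈ Finset.range N, (n (-(i : ℤ) - 1) : ℝ)) / (N : ℝ)) atTop (nhds ρ)

/-! ### Special sets of configurations -/

/-- Frozen F-SSEP configurations: no two adjacent occupied sites. -/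
def frozenF : Set X := {η | ∀ i : ℤ, η i = false ∨ η (i + 1) = false}
/-- Frozen SSM configurations: every stack has height `0` or `1`. -/
def frozenS : Set XS := {n | ∀ i : ℤ, n i ≤ 1}
/-- `X̂*`: no two adjacent short stacks. -/
def XstarS : Set XS := {n | ∀ i : ℤ, ¬(n i ≤ 1 ∧ n (i + 1) ≤ 1)}
/-- The even sector `X̂*_e`: all heights even, no two adjacent zeros. -/
def XeS : Set XS := {n | (∀ i : ℤ, Even (n i)) ∧ ∀ i : ℤ, ¬(n i = 0 ∧ n (i + 1) = 0)}
/-- `H = φ(X̂*)`: the F-SSEP configurations containing none of `000`, `0100`, `0010`, `01010`. -/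
def Hset : Set X := {η | ∀ i : ℤ,
  ¬(η i = false ∧ η (i+1) = false ∧ η (i+2) = false) ∧
  ¬(η i = false ∧ η (i+1) = true ∧ η (i+2) = false ∧ η (i+3) = false) ∧
  ¬(η i = false ∧ η (i+1) = false ∧ η (i+2) = true ∧ η (i+3) = false) ∧
  ¬(η i = false ∧ η (i+1) = true ∧ η (i+2) = false ∧ η (i+3) = true ∧ η (i+4) = false)}

/-- The height profile `h_η`, with `h_η(0) = 0` and increments `(-1)^{η(k)}`. -/
def hgt (η : X) (k : ℤ) : ℤ :=
  (∑ i ∈ Finset.Icc (1:ℤ) k, (if η i then (-1:ℤ) else 1)) -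
    (∑ i ∈ Finset.Icc (k + 1) (0:ℤ), (if η i then (-1:ℤ) else 1))

/-! ### The stationary path measure -/

/-- Finite-dimensional distributions of the stationary F-SSEP Markov chain started from `μ`. -/
def chain (μ : Measure X) : (n : ℕ) → Measure (Fin (n + 1) → X)
  | 0 => μ.map (fun η _ => η)
  | (n + 1) => (chain μ n).bind
      (fun path => (QF (path (Fin.last n))).map (fun η' => Fin.snoc path η'))

/-- `P` is the two-sided stationary path measure of the F-SSEP with one-time marginal `μ`. -/
def IsPathMeasure (μ : Measure X) (P : Measure (ℤ → X)) : Prop :=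
  IsProbabilityMeasure P ∧ ∀ (t : ℤ) (n : ℕ),
    P.map (fun ξ (k : Fin (n + 1)) => ξ (t + ((k : ℕ) : ℤ))) = chain μ n

/-! ### Bernoulli initial states and the time evolution -/

/-- An i.i.d. family of uniform `[0,1]` random variables extracted from a single uniform. -/
def unif01 (x : ℝ) (i : ℤ) : ℝ :=
  ∑' k : ℕ, if rbit (Nat.pair (Encodable.encode i) k) x then ((2:ℝ) ^ (k + 1))⁻¹ else 0

/-- The Bernoulli product measure of density `ρ` on `X`. -/
def bernoulliProd (ρ : ℝ) : Measure X :=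
  (volume.restrict (Set.Ioo (0:ℝ) 1)).map (fun x (i : ℤ) => decide (unif01 x i < ρ))

/-- `iterF μ t = μ Q^t`, the state at time `t` of the F-SSEP started from `μ`. -/
def iterF (μ : Measure X) : ℕ → Measure X
  | 0 => μ
  | (t + 1) => (iterF μ t).bind QF

/-- `S_η`: the sites `i` with `η(i-2) = η(i-1) = η(i) = 0`. -/
def Sset (η : X) : Set ℤ := {i | η (i - 2) = false ∧ η (i - 1) = false ∧ η i = false}

/-- The event that `t 0 < t 1 < ⋯ < t m` are consecutive points of `S_η`. -/
def renewEvent (t : ℕ → ℤ) (m : ℕ) : Set X :=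
  {η | (∀ j ≤ m, t j ∈ Sset η) ∧ ∀ x : ℤ, t 0 ≤ x → x ≤ t m → x ∈ Sset η → ∃ j ≤ m, t j = x}

/-! ### Substitution subshifts -/

/-- The smallest translation-invariant subset of `X` containing all configurations obtained
by the letterwise substitution `b ↦ w b`. -/
def substSet (w : Bool → List Bool) : Set X :=
  {η | ∃ (ζ : ℤ → Bool) (K : ℤ → ℤ),
    (∀ i : ℤ, K (i + 1) = K i + (w (ζ i)).length) ∧
    ∀ (i : ℤ) (j : ℕ) (h : j < (w (ζ i)).length), η (K i + (j : ℤ)) = (w (ζ i)).get ⟨j, h⟩}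

/-- The substitution `1 → 1100`, `0 → 10`. -/
def wLeft : Bool → List Bool := fun b => if b then [true, true, false, false] else [true, false]
/-- The substitution `1 → 0011`, `0 → 01`. -/
def wRight : Bool → List Bool := fun b => if b then [false, false, true, true] else [false, true]

/-- `X_left`. -/
def Xleft : Set X := substSet wLeft
/-- `X_right`. -/
def Xright : Set X := substSet wRight

/-- `X̂_left`: heights at most 2, a 2 is followed by a 0, a 0 is preceded by a 2. -/
def XSleft : Set XS :=
  {n | ∀ i : ℤ, n i ≤ 2 ∧ (n i = 2 → n (i + 1) = 0) ∧ (n i = 0 → n (i - 1) = 2)}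
/-- `X̂_right`: the spatial reflection of `X̂_left`. -/
def XSright : Set XS :=
  {n | ∀ i : ℤ, n i ≤ 2 ∧ (n i = 2 → n (i - 1) = 0) ∧ (n i = 0 → n (i + 1) = 2)}

/-! ### Ring measures and the grand canonical limit -/

/-- Admissible even ring configurations: all heights even, no two cyclically adjacent zeros. -/
def ringOK (L : ℕ) (n : ZMod (2 * L + 1) → ℕ) : Prop :=
  (∀ i, Even (n i)) ∧ ∀ i, ¬(n i = 0 ∧ n (i + 1) = 0)

/-- The grand canonical weight `ζ^{Σ n(i)} 4^{-z(n)}` of an admissible ring configuration. -/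
def ringW (ζ : ℝ) (L : ℕ) (n : ZMod (2 * L + 1) → ℕ) : ℝ≥0∞ :=
  if ringOK L n then
    (ENNReal.ofReal ζ) ^ (∑ i, n i) *
      ((4 : ℝ≥0∞) ^ (Finset.univ.filter (fun i => n i = 0)).card)⁻¹
  else 0

/-- The grand canonical measure `μ^(ζ,L)` on the ring of `2L+1` sites. -/
def muRing (ζ : ℝ) (L : ℕ) : Measure (ZMod (2 * L + 1) → ℕ) :=
  (∑' n, ringW ζ L n)⁻¹ • Measure.sum (fun n => ringW ζ L n • Measure.dirac n)

/-- The cylinder set in the ring determined by `m` on the window `[-K,K]`. -/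
def ringCyl (L K : ℕ) (m : ℤ → ℕ) : Set (ZMod (2 * L + 1) → ℕ) :=
  {n | ∀ i ∈ Finset.Icc (-(K : ℤ)) (K : ℤ), n ((i : ℤ) : ZMod (2 * L + 1)) = m i}

/-- The cylinder set in `X̂` determined by `m` on the window `[-K,K]`. -/
def cylS (K : ℕ) (m : ℤ → ℕ) : Set XS := {n | ∀ i ∈ Finset.Icc (-(K : ℤ)) (K : ℤ), n i = m i}

/-- `μ` is the weak limit `μ^(ζ,∞) = lim_L μ^(ζ,L)` (all cylinder probabilities converge). -/
def IsGCLimit (ζ : ℝ) (μ : Measure XS) : Prop :=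
  IsProbabilityMeasure μ ∧ ∀ (K : ℕ) (m : ℤ → ℕ),
    Tendsto (fun L : ℕ => muRing ζ L (ringCyl L K m)) atTop (nhds (μ (cylS K m)))

/-- `μ̂^(2)`: equal masses on the two configurations with alternating heights `0` and `2`. -/
def muHat2 : Measure XS :=
  (2 : ℝ≥0∞)⁻¹ • Measure.dirac (fun i : ℤ => if Even i then 2 else 0) +
    (2 : ℝ≥0∞)⁻¹ • Measure.dirac (fun i : ℤ => if Even i then 0 else 2)

/-- Mixing under the shift. -/
def MixingS (μ : Measure XS) : Prop :=
  ∀ A B : Set XS, MeasurableSet A → MeasurableSet B →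
    Tendsto (fun k : ℕ => μ (A ∩ shs^[k] ⁻¹' B)) atTop (nhds (μ A * μ B))

/-- Weak mixing under the shift. -/
def WeakMixS (μ : Measure XS) : Prop :=
  ∀ A B : Set XS, MeasurableSet A → MeasurableSet B →
    Tendsto (fun N : ℕ =>
      (∑ k ∈ Finset.range N,
        |(μ (A ∩ shs^[k] ⁻¹' B)).toReal - (μ A).toReal * (μ B).toReal|) / (N : ℝ))
      atTop (nhds 0)

/-- The Gibbs weight of `m` on the window `[a,b]`, for fugacity `ζ` and the one-body
potential `V(n) = 2 ln 2 · δ_{n,0}` (so `e^{-V(0)} = 1/4`). -/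
def gibbsW (ζ : ℝ) (a b : ℤ) (m : XS) : ℝ≥0∞ :=
  (ENNReal.ofReal ζ) ^ (∑ i ∈ Finset.Icc a b, m i) *
    ((4 : ℝ≥0∞) ^ ((Finset.Icc a b).filter (fun i => m i = 0)).card)⁻¹

/-- `μ` is a Gibbs state for fugacity `ζ` and one-body potential `V(n) = 2 ln 2 · δ_{n,0}`,
together with the hard constraints defining `X̂*_e` (DLR ratio condition). -/
def IsGibbsV (ζ : ℝ) (μ : Measure XS) : Prop :=
  μ XeSᶜ = 0 ∧ ∀ a b : ℤ, a ≤ b → ∀ m m' : XS, m ∈ XeS → m' ∈ XeS →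
    (∀ i : ℤ, i < a ∨ b < i → m i = m' i) →
    μ {n : XS | ∀ i ∈ Finset.Icc (a - 1) (b + 1), n i = m i} * gibbsW ζ a b m' =
      μ {n : XS | ∀ i ∈ Finset.Icc (a - 1) (b + 1), n i = m' i} * gibbsW ζ a b m

/-! ### The parity decomposition -/

/-- `γ(m,σ) = m + σ`. -/
def gam (p : XS × PS) : XS := fun i => p.1 i + (if p.2 i then 1 else 0)
/-- The inverse of `γ` (on `X̂*`): split a configuration into even part and parity. -/
def gamInv (n : XS) : XS × PS := (fun i => n i - n i % 2, fun i => decide (n i % 2 = 1))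
/-- Diagonal shift on `X̂ × S`. -/
def shP (p : XS × PS) : XS × PS := (shs p.1, shf p.2)
/-- The SSM dynamics acting on the first factor of `X̂ × S` and trivially on the second. -/
def QP (p : XS × PS) : Measure (XS × PS) := (QS p.1).map (fun m => (m, p.2))

/-- TIS state on `X̂*_e × S`. -/
def TIS_P (ν : Measure (XS × PS)) : Prop :=
  IsProbabilityMeasure ν ∧ ν.map shP = ν ∧ ν.bind QP = ν ∧ ν {p : XS × PS | p.1 ∉ XeS} = 0
/-- ETIS state on `X̂*_e × S`. -/
def ETIS_P (ν : Measure (XS × PS)) : Prop :=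
  TIS_P ν ∧ ∀ ν₁ ν₂ : Measure (XS × PS), TIS_P ν₁ → TIS_P ν₂ →
    ∀ p : ℝ≥0∞, 0 < p → p < 1 → ν = p • ν₁ + (1 - p) • ν₂ → ν₁ = ν

/-! ### The substitution bijection `Φ_φ` -/

/-- The starting position of the word substituted for the `i`-th letter (word `1` starts
at site `1`, and the word for `n(i)` is `0 1^{n(i)}`, of length `n(i) + 1`). -/
def Kst (n : XS) (i : ℤ) : ℤ :=
  1 + (∑ j ∈ Finset.Icc (1:ℤ) (i - 1), ((n j : ℤ) + 1)) -
    (∑ j ∈ Finset.Icc i (0:ℤ), ((n j : ℤ) + 1))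

/-- The substitution map `φ : X̂ → X`, replacing each height `n(i)` by `0 1^{n(i)}`. -/
def phiSub (n : XS) : X := fun x => if ∃ i : ℤ, Kst n i = x then false else true

/-- The normalization `Z_ν = Σ (k+1) ν({n(1) = k})`. -/
def Zsub (ν : Measure XS) : ℝ≥0∞ := ∑' k : ℕ, ((k : ℝ≥0∞) + 1) * ν {n : XS | n 1 = k}

/-- The bijection `Φ_φ` on regular TI measures induced by the substitution `φ`. -/
def Phi (ν : Measure XS) : Measure X :=
  (Zsub ν)⁻¹ • Measure.sum (fun p : (Σ k : ℕ, Fin (k + 1)) =>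
    (ν.restrict {n : XS | n 1 = p.1}).map (fun n (x : ℤ) => phiSub n (x + ((p.2 : ℕ) : ℤ))))

/-! ### Basic states -/

/-- The image `τ(A)` of a set of parity sequences under the shift. -/
def shiftSetP (A : Set PS) : Set PS := {σ | (fun i => σ (i + 1)) ∈ A}

/-- Cyclic successor in `Fin m`. -/
def finCycSucc {m : ℕ} (k : Fin m) : Fin m := ⟨(k.val + 1) % m, Nat.mod_lt _ k.pos⟩

/-- A `(λ,m)`-partition of `S`: pairwise disjoint, covering, cyclically permuted by the
shift (all modulo `λ`-null sets). -/
def IsCycPartition (lam : Measure PS) (m : ℕ) (A : Fin m → Set PS) : Prop :=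
  lam (⋃ k, A k)ᶜ = 0 ∧ (∀ k l, k ≠ l → lam (A k ∩ A l) = 0) ∧
    ∀ k, lam ((shiftSetP (A k) \ A (finCycSucc k)) ∪ (A (finCycSucc k) \ shiftSetP (A k))) = 0

/-- `ν^(q) = q⁻¹ Σ_{i<q} τ^{im}_* ν`. -/
def nuQ (ν : Measure XS) (q m : ℕ) : Measure XS :=
  ((q : ℝ≥0∞))⁻¹ • Measure.sum (fun i : Fin q => ν.map (shs^[(i : ℕ) * m]))

/-- The measure `μ̃^(λ,ν,A)` on `X̂*_e × S`, with `μ_σ = τ^k_* ν^(q)` for `σ ∈ A_k`. -/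
def mutilde (lam : Measure PS) (ν : Measure XS) (q m : ℕ) (A : Fin m → Set PS) :
    Measure (XS × PS) :=
  Measure.sum (fun k : Fin m => (((nuQ ν q m).map (shs^[(k : ℕ)])).prod (lam.restrict (A k))))

/-- `N_{ρ̂_e}`: stationary probability measures of the SSM supported on `X̂*_e` of
density `ρ̂_e` (not necessarily translation invariant). -/
def Nset (ρe : ℝ) : Set (Measure XS) :=
  {ν | IsProbabilityMeasure ν ∧ ν.bind QS = ν ∧ ν XeSᶜ = 0 ∧ densS ν ρe}

/-- `N̄_{ρ̂_e}`: the extreme points of `N_{ρ̂_e}`. -/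
def NExt (ρe : ℝ) : Set (Measure XS) :=
  {ν | ν ∈ Nset ρe ∧ ∀ ν₁ ν₂ : Measure XS, ν₁ ∈ Nset ρe → ν₂ ∈ Nset ρe →
    ∀ p : ℝ≥0∞, 0 < p → p < 1 → ν = p • ν₁ + (1 - p) • ν₂ → ν₁ = ν}

/-- `A'` is a proper refinement of `A` (modulo `λ`-null sets). -/
def ProperRefines (lam : Measure PS) {m m' : ℕ} (A' : Fin m' → Set PS) (A : Fin m → Set PS) :
    Prop :=
  m < m' ∧ ∀ j : Fin m', ∃ k : Fin m, lam (A' j \ A k) = 0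

/-- `μ` is an irreducible basic state of the SSM on `X̂*`. -/
def IsIrreducibleBasic (μ : Measure XS) : Prop :=
  ∃ (lam : Measure PS) (ρe : ℝ) (ν : Measure XS) (n m q : ℕ) (A : Fin m → Set PS),
    ErgF lam ∧ 1 ≤ ρe ∧ ν ∈ NExt ρe ∧
    0 < n ∧ ν.map (shs^[n]) = ν ∧ (∀ j : ℕ, 0 < j → j < n → ν.map (shs^[j]) ≠ ν) ∧
    n = q * m ∧ IsCycPartition lam m A ∧
    (¬ ∃ (m' : ℕ) (A' : Fin m' → Set PS),
      m' ∣ n ∧ IsCycPartition lam m' A' ∧ ProperRefines lam A' A) ∧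
    μ = (mutilde lam ν q m A).map gam

/-!
The occupation counts of `[1, N]` and `[-N, -1]` are Birkhoff sums of `η ↦ η(±1)` along the
shift. One step of the F-SSEP changes them by at most `2` (particles move one site, so the count
only changes through the currents across the two boundary bonds), and so does one shift.
Hence the event that these sums, minus `N s`, are unbounded above is invariant under both the
dynamics and the shift. Restricting a stationary measure to such an event keeps it stationary,
so for an ETIS state the event has probability `0` or `1`; Garsia's maximal ergodic lemma rules
out `1` when `s` exceeds the mean occupation, and the two-sided bounds give the density. Frozen
configurations are fixed by the dynamics; stationarity forbids mass flowing into `F` from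
outside, and the same `0`–`1` argument applies to `F`.
-/

section MarkovKernel

variable {α : Type*} [MeasurableSpace α] {κ : α → Measure α} {μ : Measure α} {A : Set α}

lemma bind_restrict_eq_restrict [∀ a, IsProbabilityMeasure (κ a)] (hκ : Measurable κ)
    (hμ : μ.bind κ = μ) (hA : MeasurableSet A) (hinv : ∀ᵐ a ∂μ, κ a A = A.indicator 1 a) :
    (μ.restrict A).bind κ = μ.restrict A := by
  ext s hs
  have hlocal : ∀ᵐ a ∂μ, A.indicator (fun a => κ a s) a = κ a (s ∩ A) := by
    filter_upwards [hinv] with a ha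
    by_cases haA : a ∈ A
    · rw [Set.indicator_of_mem haA] at ha ⊢
      exact (measure_inter_conull ((prob_compl_eq_zero_iff hA).2 ha)).symm
    · rw [Set.indicator_of_notMem haA] at ha ⊢
      exact (measure_mono_null Set.inter_subset_right ha).symm
  rw [Measure.bind_apply hs hκ.aemeasurable, Measure.restrict_apply hs,
    ← lintegral_indicator hA, lintegral_congr_ae hlocal,
    ← Measure.bind_apply (hs.inter hA) hκ.aemeasurable, hμ]

lemma measure_compl_eq_indicator {ν : Measure α} [IsProbabilityMeasure ν] (hA : MeasurableSet A)
    {a : α} (h : ν A = A.indicator 1 a) : ν Aᶜ = Aᶜ.indicator 1 a := by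
  by_cases haA : a ∈ A
  · rw [Set.indicator_of_notMem (Set.notMem_compl_iff.2 haA), prob_compl_eq_zero_iff hA, h,
      Set.indicator_of_mem haA, Pi.one_apply]
  · rw [Set.indicator_of_mem haA, Pi.one_apply, prob_compl_eq_one_iff hA, h,
      Set.indicator_of_notMem haA]

lemma ae_eq_indicator_of_forall_mem [IsFiniteMeasure μ] (hκ : Measurable κ)
    (hμ : μ.bind κ = μ) (hA : MeasurableSet A) (hclosed : ∀ a ∈ A, κ a A = 1) :
    ∀ᵐ a ∂μ, κ a A = A.indicator 1 a := by
  have hκA : Measurable fun a => κ a A := (Measure.measurable_coe hA).comp hκ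
  have htotal : ∫⁻ a in A, κ a A ∂μ + ∫⁻ a in Aᶜ, κ a A ∂μ = μ A := by
    rw [lintegral_add_compl _ hA, ← Measure.bind_apply hA hκ.aemeasurable, hμ]
  rw [setLIntegral_congr_fun hA hclosed, setLIntegral_one] at htotal
  have hleak : ∀ᵐ a ∂μ, a ∈ Aᶜ → κ a A = 0 :=
    (ae_restrict_iff' hA.compl).1 <| (lintegral_eq_zero_iff hκA).1 <|
      (ENNReal.add_right_inj (measure_ne_top μ A)).1 (htotal.trans (add_zero _).symm)
  filter_upwards [hleak] with a ha
  by_cases haA : a ∈ A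
  · rw [Set.indicator_of_mem haA, hclosed a haA, Pi.one_apply]
  · rw [Set.indicator_of_notMem haA, ha haA]

end MarkovKernel

section MaximalErgodic

variable {Ω : Type*} {T : Ω → Ω} {g : Ω → ℝ}

def birkhoffMax (T : Ω → Ω) (g : Ω → ℝ) (N : ℕ) (x : Ω) : ℝ :=
  (Finset.range (N + 1)).sup' Finset.nonempty_range_add_one fun n => birkhoffSum T g n x

lemma birkhoffSum_le_birkhoffMax {n N : ℕ} (h : n ≤ N) (x : Ω) :
    birkhoffSum T g n x ≤ birkhoffMax T g N x :=
  Finset.le_sup' (fun n => birkhoffSum T g n x) (Finset.mem_range_succ_iff.2 h)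

lemma birkhoffMax_nonneg (N : ℕ) (x : Ω) : 0 ≤ birkhoffMax T g N x := by
  simpa using birkhoffSum_le_birkhoffMax (T := T) (g := g) N.zero_le x

lemma birkhoffMax_mono (x : Ω) : Monotone fun N => birkhoffMax T g N x := fun _ _ h =>
  Finset.sup'_le _ _ fun _ hn =>
    birkhoffSum_le_birkhoffMax ((Finset.mem_range_succ_iff.1 hn).trans h) x

lemma birkhoffMax_le_add {N : ℕ} {x : Ω} (hx : 0 < birkhoffMax T g N x) :
    birkhoffMax T g N x ≤ g x + birkhoffMax T g N (T x) := by
  obtain ⟨n, hn, hmax⟩ := Finset.exists_mem_eq_sup' Finset.nonempty_range_add_one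
    fun n => birkhoffSum T g n x
  rw [birkhoffMax, hmax]
  rw [birkhoffMax, hmax] at hx
  obtain _ | k := n
  · simp at hx
  rw [birkhoffSum_succ']
  exact (add_le_add_iff_left _).2 <| birkhoffSum_le_birkhoffMax
    (Nat.le_of_succ_le (Finset.mem_range_succ_iff.1 hn)) (T x)

lemma measurable_birkhoffSum [MeasurableSpace Ω] (hT : Measurable T) (hg : Measurable g)
    (n : ℕ) :
    Measurable (birkhoffSum T g n) :=
  Finset.measurable_sum _ fun i _ => hg.comp (hT.iterate i)

lemma measurable_birkhoffMax [MeasurableSpace Ω] (hT : Measurable T) (hg : Measurable g)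
    (N : ℕ) :
    Measurable (birkhoffMax T g N) :=
  Finset.measurable_range_sup'' fun n _ => measurable_birkhoffSum hT hg n

lemma abs_birkhoffSum_le {C : ℝ} (hC : ∀ x, |g x| ≤ C) (n : ℕ) (x : Ω) :
    |birkhoffSum T g n x| ≤ n * C :=
  (Finset.abs_sum_le_sum_abs _ _).trans <| by
    simpa using Finset.sum_le_sum fun i (_ : i ∈ Finset.range n) => hC (T^[i] x)

lemma abs_birkhoffMax_le {C : ℝ} (hC : ∀ x, |g x| ≤ C) (N : ℕ) (x : Ω) :
    |birkhoffMax T g N x| ≤ N * C := by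
  have hC0 : 0 ≤ C := (abs_nonneg _).trans (hC x)
  rw [abs_of_nonneg (birkhoffMax_nonneg N x)]
  refine Finset.sup'_le _ _ fun n hn =>
    (le_abs_self _).trans ((abs_birkhoffSum_le hC n x).trans ?_)
  gcongr
  exact_mod_cast Finset.mem_range_succ_iff.1 hn

lemma abs_birkhoffSum_apply_sub_le {C : ℝ} (hC : ∀ x, |g x| ≤ C) (n : ℕ) (x : Ω) :
    |birkhoffSum T g n (T x) - birkhoffSum T g n x| ≤ 2 * C := by
  rw [birkhoffSum_apply_sub_birkhoffSum]
  linarith [abs_sub (g (T^[n] x)) (g x), hC (T^[n] x), hC x]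

lemma integrable_birkhoffMax [MeasurableSpace Ω] {μ : Measure Ω} [IsFiniteMeasure μ]
    (hT : Measurable T) (hg : Measurable g) {C : ℝ} (hC : ∀ x, |g x| ≤ C) (N : ℕ) :
    Integrable (birkhoffMax T g N) μ :=
  .of_bound (measurable_birkhoffMax hT hg N).aestronglyMeasurable (N * C)
    (.of_forall (abs_birkhoffMax_le hC N))

/-- Garsia's maximal ergodic lemma. -/
theorem setIntegral_birkhoffMax_pos_nonneg [MeasurableSpace Ω] {μ : Measure Ω}
    [IsFiniteMeasure μ] (hT : MeasurePreserving T μ μ) (hg : Measurable g) {C : ℝ}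
    (hC : ∀ x, |g x| ≤ C) (N : ℕ) : 0 ≤ ∫ x in {x | 0 < birkhoffMax T g N x}, g x ∂μ := by
  set E := {x | 0 < birkhoffMax T g N x}
  have hmax := measurable_birkhoffMax hT.measurable hg N
  have hint := integrable_birkhoffMax (μ := μ) hT.measurable hg hC N
  have hintT : Integrable (fun x => birkhoffMax T g N (T x)) μ :=
    hT.integrable_comp_of_integrable hint
  have hpt : ∀ x, birkhoffMax T g N x - birkhoffMax T g N (T x) ≤ E.indicator g x := by
    intro x
    by_cases hx : x ∈ E
    · rw [Set.indicator_of_mem hx]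
      linarith [birkhoffMax_le_add hx]
    · rw [Set.indicator_of_notMem hx]
      linarith [le_antisymm (not_lt.1 hx) (birkhoffMax_nonneg N x),
        birkhoffMax_nonneg (T := T) (g := g) N (T x)]
  have hcomp : ∫ x, birkhoffMax T g N (T x) ∂μ = ∫ x, birkhoffMax T g N x ∂μ := by
    conv_rhs => rw [← hT.map_eq]
    exact (integral_map hT.measurable.aemeasurable hmax.aestronglyMeasurable).symm
  calc (0 : ℝ) = ∫ x, (birkhoffMax T g N x - birkhoffMax T g N (T x)) ∂μ := by
        rw [integral_sub hint hintT, hcomp, sub_self]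
    _ ≤ ∫ x, E.indicator g x ∂μ :=
        integral_mono (hint.sub hintT)
          ((Integrable.of_bound hg.aestronglyMeasurable C (.of_forall hC)).indicator
            (measurableSet_lt measurable_const hmax)) hpt
    _ = ∫ x in E, g x ∂μ := integral_indicator (measurableSet_lt measurable_const hmax)

theorem integral_nonneg_of_ae_exists_birkhoffSum_pos [MeasurableSpace Ω] {μ : Measure Ω}
    [IsFiniteMeasure μ] (hT : MeasurePreserving T μ μ) (hg : Measurable g) {C : ℝ}
    (hC : ∀ x, |g x| ≤ C) (hpos : ∀ᵐ x ∂μ, ∃ n, 0 < birkhoffSum T g n x) :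
    0 ≤ ∫ x, g x ∂μ := by
  set E : ℕ → Set Ω := fun N => {x | 0 < birkhoffMax T g N x}
  have hlim : Tendsto (fun N => ∫ x in E N, g x ∂μ) atTop (nhds (∫ x in ⋃ N, E N, g x ∂μ)) :=
    tendsto_setIntegral_of_monotone
      (fun N => measurableSet_lt measurable_const (measurable_birkhoffMax hT.measurable hg N))
      (fun _ _ h x hx => lt_of_lt_of_le hx (birkhoffMax_mono x h))
      (Integrable.of_bound hg.aestronglyMeasurable C (.of_forall hC)).integrableOn
  have hcover : ∀ᵐ x ∂μ, x ∈ ⋃ N, E N := by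
    filter_upwards [hpos] with x ⟨n, hn⟩
    exact Set.mem_iUnion.2 ⟨n, hn.trans_le (birkhoffSum_le_birkhoffMax le_rfl x)⟩
  rw [Measure.restrict_eq_self_of_ae_mem hcover] at hlim
  exact ge_of_tendsto' hlim (setIntegral_birkhoffMax_pos_nonneg hT hg hC)

end MaximalErgodic

lemma bddAbove_range_of_abs_sub_le {u v : ℕ → ℝ} {C : ℝ} (h : ∀ N, |u N - v N| ≤ C)
    (hv : BddAbove (Set.range v)) : BddAbove (Set.range u) := by
  obtain ⟨b, hb⟩ := hv
  refine ⟨b + C, Set.forall_mem_range.2 fun N => ?_⟩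
  linarith [hb (Set.mem_range_self N), (abs_le.1 (h N)).2]

lemma bddAbove_range_iff_of_abs_sub_le {u v : ℕ → ℝ} {C : ℝ} (h : ∀ N, |u N - v N| ≤ C) :
    BddAbove (Set.range u) ↔ BddAbove (Set.range v) :=
  ⟨bddAbove_range_of_abs_sub_le fun N => abs_sub_comm (u N) (v N) ▸ h N,
    bddAbove_range_of_abs_sub_le h⟩

lemma eventually_div_lt_of_bddAbove {u : ℕ → ℝ} {s b : ℝ} (hsb : s < b)
    (hu : BddAbove (Set.range fun N : ℕ => u N - N * s)) : ∀ᶠ N : ℕ in atTop, u N / N < b := by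
  obtain ⟨K, hK⟩ := hu
  filter_upwards [tendsto_natCast_atTop_atTop.eventually_gt_atTop (max (K / (b - s)) 0)]
    with N hN
  have hN0 : (0 : ℝ) < N := (le_max_right _ _).trans_lt hN
  have hKN : K < (b - s) * N := (div_lt_iff₀' (sub_pos.2 hsb)).1 ((le_max_left _ _).trans_lt hN)
  rw [div_lt_iff₀ hN0]
  linarith [hK (Set.mem_range_self N)]

lemma tendsto_div_of_forall_bddAbove {u : ℕ → ℝ} {ρ : ℝ}
    (hup : ∀ s : ℚ, ρ < s → BddAbove (Set.range fun N : ℕ => u N - N * s))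
    (hlow : ∀ s : ℚ, (s : ℝ) < ρ → BddAbove (Set.range fun N : ℕ => N * s - u N)) :
    Tendsto (fun N : ℕ => u N / N) atTop (nhds ρ) := by
  refine tendsto_order.2 ⟨fun b hb => ?_, fun b hb => ?_⟩
  · obtain ⟨s, hbs, hsρ⟩ := exists_rat_btwn hb
    have hneg := eventually_div_lt_of_bddAbove (u := -u) (neg_lt_neg hbs)
      (by simpa [neg_sub_comm, sub_eq_add_neg, add_comm] using hlow s hsρ)
    filter_upwards [hneg] with N hN
    rw [Pi.neg_apply, neg_div] at hN
    linarith
  · obtain ⟨s, hρs, hsb⟩ := exists_rat_btwn hb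
    exact eventually_div_lt_of_bddAbove hsb (hup s hρs)

lemma measurable_shf : Measurable shf :=
  measurable_pi_lambda _ fun i => measurable_pi_apply (i - 1)

lemma measurable_rbit (m : ℕ) : Measurable (rbit m) :=
  (measurable_of_countable fun z : ℤ => decide (z % 2 = 1)).comp
    (Int.measurable_floor.comp (measurable_id.mul_const _))

instance : IsProbabilityMeasure coin := by
  have : IsProbabilityMeasure (volume.restrict (Set.Ioo (0:ℝ) 1)) := ⟨by simp⟩
  exact Measure.isProbabilityMeasure_map
    (measurable_pi_lambda _ fun i => measurable_rbit _).aemeasurable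

lemma measurable_fstep_uncurry : Measurable (Function.uncurry fstep) := by
  unfold Function.uncurry fstep jumpsR jumpsL wantsR wantsL
  fun_prop

lemma measurable_fstep (η : X) : Measurable (fstep η) :=
  measurable_fstep_uncurry.comp measurable_prodMk_left

instance (η : X) : IsProbabilityMeasure (QF η) :=
  Measure.isProbabilityMeasure_map (measurable_fstep η).aemeasurable

lemma measurable_QF : Measurable QF := by
  have hQF : QF = fun η => (coin.map (Prod.mk η)).map (Function.uncurry fstep) := by
    funext η
    rw [Measure.map_map measurable_fstep_uncurry measurable_prodMk_left]
    rfl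
  rw [hQF]
  exact (Measure.measurable_map _ measurable_fstep_uncurry).comp Measurable.map_prodMk_left

lemma QF_apply_eq_indicator {η : X} {A : Set X} (hA : MeasurableSet A)
    (hinv : ∀ α, fstep η α ∈ A ↔ η ∈ A) : QF η A = A.indicator 1 η := by
  rw [QF, Measure.map_apply (measurable_fstep η) hA]
  by_cases hη : η ∈ A
  · rw [Set.indicator_of_mem hη, Pi.one_apply, ← measure_univ (μ := coin)]
    congr 1
    exact Set.eq_univ_of_forall fun α => (hinv α).2 hη
  · rw [Set.indicator_of_notMem hη]
    convert measure_empty (μ := coin)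
    exact Set.eq_empty_of_forall_notMem fun α hα => hη ((hinv α).1 hα)

lemma TISF_inv_smul_restrict {μ : Measure X} (hμ : TIF μ) {A : Set X} (hA : MeasurableSet A)
    (hshift : shf ⁻¹' A = A) (hstat : (μ.restrict A).bind QF = μ.restrict A) (h0 : μ A ≠ 0) :
    TISF ((μ A)⁻¹ • μ.restrict A) := by
  have : IsProbabilityMeasure μ := hμ.1
  refine ⟨⟨⟨?_⟩, ?_⟩, ?_⟩
  · rw [Measure.smul_apply, Measure.restrict_apply_univ, smul_eq_mul,
      ENNReal.inv_mul_cancel h0 (measure_ne_top μ A)]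
  · rw [Measure.map_smul, ← hshift, ← Measure.restrict_map measurable_shf hA, hμ.2, hshift]
  · rw [Measure.bind_smul, hstat]

lemma ETISF.measure_eq_zero_or_one {μ : Measure X} (hμ : ETISF μ) {A : Set X}
    (hA : MeasurableSet A) (hshift : shf ⁻¹' A = A)
    (hinv : ∀ᵐ η ∂μ, QF η A = A.indicator 1 η) : μ A = 0 ∨ μ A = 1 := by
  have : IsProbabilityMeasure μ := hμ.1.1.1
  by_contra! h
  obtain ⟨h0, h1⟩ := h
  have hAc : μ Aᶜ ≠ 0 := by rwa [Ne, prob_compl_eq_zero_iff hA]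
  have hinvc : ∀ᵐ η ∂μ, QF η Aᶜ = Aᶜ.indicator 1 η := by
    filter_upwards [hinv] with η hη using measure_compl_eq_indicator hA hη
  have hTIS := TISF_inv_smul_restrict hμ.1.1 hA hshift
    (bind_restrict_eq_restrict measurable_QF hμ.1.2 hA hinv) h0
  have hTISc := TISF_inv_smul_restrict hμ.1.1 hA.compl (by rw [Set.preimage_compl, hshift])
    (bind_restrict_eq_restrict measurable_QF hμ.1.2 hA.compl hinvc) hAc
  have hdecomp : μ = μ A • ((μ A)⁻¹ • μ.restrict A) + (1 - μ A) • ((μ Aᶜ)⁻¹ • μ.restrict Aᶜ) := by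
    rw [← prob_compl_eq_one_sub hA, smul_smul, smul_smul,
      ENNReal.mul_inv_cancel h0 (measure_ne_top μ A),
      ENNReal.mul_inv_cancel hAc (measure_ne_top μ Aᶜ), one_smul, one_smul,
      Measure.restrict_add_restrict_compl hA]
  have heq := hμ.2 _ _ hTIS hTISc (μ A) (pos_iff_ne_zero.2 h0) (lt_of_le_of_ne prob_le_one h1)
    hdecomp
  apply h1
  rw [← heq, Measure.smul_apply, Measure.restrict_apply_self, smul_eq_mul,
    ENNReal.inv_mul_cancel h0 (measure_ne_top μ A)]

lemma measurableSet_frozenF : MeasurableSet frozenF := by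
  unfold frozenF
  measurability

lemma preimage_shf_frozenF : shf ⁻¹' frozenF = frozenF := by
  ext η
  simp only [frozenF, shf, Set.mem_preimage, Set.mem_ofPred_eq]
  constructor
  · intro h i
    simpa using h (i + 1)
  · intro h i
    simpa using h (i - 1)

lemma fstep_of_mem_frozenF {η : X} (hη : η ∈ frozenF) (α : ℤ → Bool) : fstep η α = η := by
  have hR : ∀ j, wantsR η j = false := fun j => by
    rcases hη (j - 1) with h | h <;> simp_all [wantsR]
  have hL : ∀ j, wantsL η j = false := fun j => by
    rcases hη j with h | h <;> simp_all [wantsL]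
  funext i
  simp [fstep, jumpsR, jumpsL, hR, hL]

lemma ETISF.frozenF_eq_zero_or_one {μ : Measure X} (hμ : ETISF μ) :
    μ frozenF = 0 ∨ μ frozenF = 1 := by
  have : IsProbabilityMeasure μ := hμ.1.1.1
  refine hμ.measure_eq_zero_or_one measurableSet_frozenF preimage_shf_frozenF
    (ae_eq_indicator_of_forall_mem measurable_QF hμ.1.2 measurableSet_frozenF fun η hη => ?_)
  rw [QF_apply_eq_indicator measurableSet_frozenF fun α => by rw [fstep_of_mem_frozenF hη],
    Set.indicator_of_mem hη, Pi.one_apply]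

def occ (η : X) (i : ℤ) : ℝ := if η i then 1 else 0

/-- Net number of particles crossing the bond `⟨i, i+1⟩` to the right in one step. -/
def current (η α : ℤ → Bool) (i : ℤ) : ℝ :=
  (if jumpsR η α i then 1 else 0) - (if jumpsL η α (i + 1) then 1 else 0)

lemma abs_current_le (η α : ℤ → Bool) (i : ℤ) : |current η α i| ≤ 1 := by
  unfold current
  split_ifs <;> norm_num

lemma abs_occ_le (η : X) (i : ℤ) : |occ η i| ≤ 1 := by
  unfold occ
  split_ifs <;> norm_num

section JumpRules

variable {η : X} (α : ℤ → Bool) {i : ℤ}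

lemma jumpsR_eq_false_of_target (h : η i = true) : jumpsR η α (i - 1) = false := by
  simp [jumpsR, wantsR, h]

lemma jumpsL_eq_false_of_target (h : η i = true) : jumpsL η α (i + 1) = false := by
  simp [jumpsL, wantsL, h]

lemma jumpsR_eq_false_of_empty (h : η i = false) : jumpsR η α i = false := by
  simp [jumpsR, wantsR, h]

lemma jumpsL_eq_false_of_empty (h : η i = false) : jumpsL η α i = false := by
  simp [jumpsL, wantsL, h]

lemma jumpsL_eq_false_of_jumpsR (hR : jumpsR η α i = true) : jumpsL η α i = false := by
  simp only [jumpsR, wantsR, Bool.and_eq_true] at hR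
  simp [jumpsL, wantsL, hR.1.1.2]

-- The coin `α i` at the common target site decides which of the two competing jumps happens.
lemma jumpsL_eq_false_of_jumpsR_into (hR : jumpsR η α (i - 1) = true) :
    jumpsL η α (i + 1) = false := by
  have e : i - 1 + 2 = i + 1 := by ring
  have e' : i + 1 - 2 = i - 1 := by ring
  simp only [jumpsR, e, sub_add_cancel, Bool.and_eq_true] at hR
  obtain ⟨hwR, hcoin⟩ := hR
  cases hwL : wantsL η (i + 1)
  · simp [jumpsL, hwL]
  · simp only [hwL, Bool.not_true, Bool.false_or] at hcoin
    simp [jumpsL, e', hwR, hcoin]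

end JumpRules

lemma occ_fstep (η α : ℤ → Bool) (i : ℤ) :
    occ (fstep η α) i = occ η i + current η α (i - 1) - current η α i := by
  cases h : η i
  · have hR := jumpsR_eq_false_of_empty α h
    have hL := jumpsL_eq_false_of_empty α h
    cases hjR : jumpsR η α (i - 1)
    · cases hjL : jumpsL η α (i + 1) <;> simp [fstep, current, occ, h, hR, hL, hjR, hjL]
    · have hjL := jumpsL_eq_false_of_jumpsR_into α hjR
      simp [fstep, current, occ, h, hR, hL, hjR, hjL]
  · have hR := jumpsR_eq_false_of_target α h
    have hL := jumpsL_eq_false_of_target α h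
    cases hjR : jumpsR η α i
    · cases hjL : jumpsL η α i <;> simp [fstep, current, occ, h, hR, hL, hjR, hjL]
    · have hjL := jumpsL_eq_false_of_jumpsR α hjR
      simp [fstep, current, occ, h, hR, hL, hjR, hjL]

lemma abs_sum_range_sub_le_two {c : ℕ → ℝ} (hc : ∀ i, |c i| ≤ 1) (n : ℕ) :
    |∑ i ∈ Finset.range n, (c (i + 1) - c i)| ≤ 2 := by
  rw [Finset.sum_range_sub]
  calc |c n - c 0| ≤ |c n| + |c 0| := abs_sub _ _
    _ ≤ 2 := by linarith [hc n, hc 0]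

lemma abs_sum_occ_fstep_sub_le_right (η α : ℤ → Bool) (N : ℕ) :
    |∑ i ∈ Finset.range N, occ (fstep η α) (i + 1) - ∑ i ∈ Finset.range N, occ η (i + 1)|
      ≤ 2 := by
  rw [← Finset.sum_sub_distrib]
  convert abs_sum_range_sub_le_two (c := fun k => -current η α k)
    (fun k => by rw [abs_neg]; exact abs_current_le η α k) N using 3 with i
  rw [occ_fstep]
  push_cast
  ring_nf

lemma abs_sum_occ_fstep_sub_le_left (η α : ℤ → Bool) (N : ℕ) :
    |∑ i ∈ Finset.range N, occ (fstep η α) (-i - 1) - ∑ i ∈ Finset.range N, occ η (-i - 1)|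
      ≤ 2 := by
  rw [← Finset.sum_sub_distrib]
  convert abs_sum_range_sub_le_two (c := fun k => current η α (-k - 1))
    (fun k => abs_current_le η α _) N using 3 with i
  rw [occ_fstep]
  push_cast
  ring_nf

theorem ETISF.ae_bddAbove_birkhoffSum_sub {μ : Measure X} (hμ : ETISF μ) {T : X → X}
    (hT : MeasurePreserving T μ μ) {f : X → ℝ} (hf : Measurable f) {C : ℝ}
    (hC : ∀ η, |f η| ≤ C)
    (hshift : ∀ η, ∃ K, ∀ N, |birkhoffSum T f N (shf η) - birkhoffSum T f N η| ≤ K)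
    (hstep : ∀ η α, ∃ K, ∀ N, |birkhoffSum T f N (fstep η α) - birkhoffSum T f N η| ≤ K)
    {s : ℝ} (hs : ∫ η, f η ∂μ < s) :
    ∀ᵐ η ∂μ, BddAbove (Set.range fun N : ℕ => birkhoffSum T f N η - N * s) := by
  have : IsProbabilityMeasure μ := hμ.1.1.1
  set A : Set X := {η | ¬ BddAbove (Set.range fun N : ℕ => birkhoffSum T f N η - N * s)}
  have hrobust : ∀ η η', (∃ K, ∀ N, |birkhoffSum T f N η' - birkhoffSum T f N η| ≤ K) →
      (η' ∈ A ↔ η ∈ A) := by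
    rintro η η' ⟨K, hK⟩
    exact not_congr (bddAbove_range_iff_of_abs_sub_le (C := K) fun N => by simpa using hK N)
  have hA : MeasurableSet A := (measurableSet_bddAbove_range fun N =>
    (measurable_birkhoffSum hT.measurable hf N).sub_const _).compl
  rcases hμ.measure_eq_zero_or_one hA (Set.ext fun η => hrobust η _ (hshift η))
      (ae_of_all _ fun η => QF_apply_eq_indicator hA fun α => hrobust η _ (hstep η α))
    with hA0 | hA1
  · filter_upwards [measure_eq_zero_iff_ae_notMem.1 hA0] with η hη using not_not.1 hη
  · set g : X → ℝ := fun η => f η - s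
    have hg : ∀ N η, birkhoffSum T g N η = birkhoffSum T f N η - N * s := by
      simp [g, birkhoffSum, Finset.sum_sub_distrib]
    have hpos : ∀ᵐ η ∂μ, ∃ n, 0 < birkhoffSum T g n η := by
      filter_upwards [mem_ae_iff.2 ((prob_compl_eq_zero_iff hA).2 hA1)] with η hη
      obtain ⟨_, ⟨n, rfl⟩, hn⟩ := not_bddAbove_iff.1 hη 0
      exact ⟨n, (hg n η).symm ▸ hn⟩
    have hgC : ∀ η, |g η| ≤ C + |s| := fun η => (abs_sub _ _).trans (by linarith [hC η])
    have := integral_nonneg_of_ae_exists_birkhoffSum_pos hT (hf.sub_const s) hgC hpos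
    rw [integral_sub (.of_bound hf.aestronglyMeasurable C (.of_forall hC)) (integrable_const s),
      integral_const, probReal_univ, one_smul] at this
    linarith

theorem ETISF.ae_tendsto_birkhoffSum_div {μ : Measure X} (hμ : ETISF μ) {T : X → X}
    (hT : MeasurePreserving T μ μ) {f : X → ℝ} (hf : Measurable f) {C : ℝ}
    (hC : ∀ η, |f η| ≤ C)
    (hshift : ∀ η, ∃ K, ∀ N, |birkhoffSum T f N (shf η) - birkhoffSum T f N η| ≤ K)
    (hstep : ∀ η α, ∃ K, ∀ N, |birkhoffSum T f N (fstep η α) - birkhoffSum T f N η| ≤ K) :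
    ∀ᵐ η ∂μ, Tendsto (fun N : ℕ => birkhoffSum T f N η / N) atTop (nhds (∫ η, f η ∂μ)) := by
  have hup : ∀ s : ℚ, ∫ η, f η ∂μ < s →
      ∀ᵐ η ∂μ, BddAbove (Set.range fun N : ℕ => birkhoffSum T f N η - N * s) := fun s hs =>
    hμ.ae_bddAbove_birkhoffSum_sub hT hf hC hshift hstep hs
  have hlow : ∀ s : ℚ, (s : ℝ) < ∫ η, f η ∂μ →
      ∀ᵐ η ∂μ, BddAbove (Set.range fun N : ℕ => N * s - birkhoffSum T f N η) := fun s hs => by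
    have hneg := hμ.ae_bddAbove_birkhoffSum_sub hT hf.neg (C := C) (by simpa using hC)
      (fun η => (hshift η).imp fun K hK N => by
        rw [birkhoffSum_neg, birkhoffSum_neg, neg_sub_neg, abs_sub_comm]
        exact hK N)
      (fun η α => (hstep η α).imp fun K hK N => by
        rw [birkhoffSum_neg, birkhoffSum_neg, neg_sub_neg, abs_sub_comm]
        exact hK N)
      (s := -s) (by simp only [Pi.neg_apply, integral_neg]; linarith)
    simpa [birkhoffSum_neg, sub_eq_add_neg, add_comm] using hneg
  filter_upwards [ae_all_iff.2 fun s => eventually_imp_distrib_left.2 (hup s),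
    ae_all_iff.2 fun s => eventually_imp_distrib_left.2 (hlow s)] with η hηup hηlow
  exact tendsto_div_of_forall_bddAbove hηup hηlow

def shfInv (η : X) : X := fun i => η (i + 1)

lemma measurable_shfInv : Measurable shfInv :=
  measurable_pi_lambda _ fun i => measurable_pi_apply (i + 1)

lemma shfInv_shf (η : X) : shfInv (shf η) = η := by
  funext i
  simp [shf, shfInv]

lemma measurePreserving_shfInv {μ : Measure X} (hμ : μ.map shf = μ) :
    MeasurePreserving shfInv μ μ := by
  refine ⟨measurable_shfInv, ?_⟩
  conv_lhs => rw [← hμ]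
  rw [Measure.map_map measurable_shfInv measurable_shf, Function.comp_def]
  simp [shfInv_shf]

lemma iterate_shfInv_apply (n : ℕ) (η : X) (i : ℤ) : shfInv^[n] η i = η (i + n) := by
  induction n generalizing i with
  | zero => simp
  | succ n ih =>
    rw [Function.iterate_succ_apply', shfInv, ih]
    push_cast
    ring_nf

lemma iterate_shf_apply (n : ℕ) (η : X) (i : ℤ) : shf^[n] η i = η (i - n) := by
  induction n generalizing i with
  | zero => simp
  | succ n ih =>
    rw [Function.iterate_succ_apply', shf, ih]
    push_cast
    ring_nf

lemma birkhoffSum_shfInv_occ (N : ℕ) (η : X) :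
    birkhoffSum shfInv (fun η => occ η 1) N η = ∑ i ∈ Finset.range N, occ η (i + 1) := by
  simp only [birkhoffSum, occ, iterate_shfInv_apply, add_comm (1 : ℤ)]

lemma birkhoffSum_shf_occ (N : ℕ) (η : X) :
    birkhoffSum shf (fun η => occ η (-1)) N η = ∑ i ∈ Finset.range N, occ η (-i - 1) := by
  simp only [birkhoffSum, occ, iterate_shf_apply, sub_eq_add_neg, add_comm (-1 : ℤ)]

lemma measurable_occ (i : ℤ) : Measurable fun η : X => occ η i :=
  (measurable_of_countable fun b : Bool => if b then (1 : ℝ) else 0).comp (measurable_pi_apply i)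

lemma integral_occ_sub_one {μ : Measure X} (hμ : μ.map shf = μ) (i : ℤ) :
    ∫ η, occ η (i - 1) ∂μ = ∫ η, occ η i ∂μ := by
  conv_rhs => rw [← hμ]
  rw [integral_map measurable_shf.aemeasurable (measurable_occ i).aestronglyMeasurable]
  rfl

theorem ETISF.ae_tendsto_density_right {μ : Measure X} (hμ : ETISF μ) :
    ∀ᵐ η ∂μ, Tendsto (fun N : ℕ => (∑ i ∈ Finset.range N, occ η (i + 1)) / N) atTop
      (nhds (∫ η, occ η 1 ∂μ)) := by
  have hT := measurePreserving_shfInv hμ.1.1.2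
  simpa only [birkhoffSum_shfInv_occ] using hμ.ae_tendsto_birkhoffSum_div hT (measurable_occ 1)
    (fun η => abs_occ_le η 1)
    (fun η => ⟨2, fun N => by
      simpa [abs_sub_comm, shfInv_shf] using abs_birkhoffSum_apply_sub_le (T := shfInv)
        (fun η => abs_occ_le η 1) N (shf η)⟩)
    (fun η α => ⟨2, fun N => by
      simpa only [birkhoffSum_shfInv_occ] using abs_sum_occ_fstep_sub_le_right η α N⟩)

theorem ETISF.ae_tendsto_density_left {μ : Measure X} (hμ : ETISF μ) :
    ∀ᵐ η ∂μ, Tendsto (fun N : ℕ => (∑ i ∈ Finset.range N, occ η (-i - 1)) / N) atTop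
      (nhds (∫ η, occ η (-1) ∂μ)) := by
  have hT : MeasurePreserving shf μ μ := ⟨measurable_shf, hμ.1.1.2⟩
  simpa only [birkhoffSum_shf_occ] using hμ.ae_tendsto_birkhoffSum_div hT (measurable_occ (-1))
    (fun η => abs_occ_le η (-1))
    (fun η => ⟨_, fun N => abs_birkhoffSum_apply_sub_le (fun η => abs_occ_le η (-1)) N η⟩)
    (fun η α => ⟨2, fun N => by
      simpa only [birkhoffSum_shf_occ] using abs_sum_occ_fstep_sub_le_left η α N⟩)

lemma integral_occ_mem_Icc (μ : Measure X) [IsProbabilityMeasure μ] (i : ℤ) :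
    ∫ η, occ η i ∂μ ∈ Set.Icc (0 : ℝ) 1 := by
  have hbound : ∀ η, occ η i ∈ Set.Icc (0 : ℝ) 1 := fun η => by
    unfold occ
    split_ifs <;> norm_num
  refine ⟨integral_nonneg fun η => (hbound η).1, ?_⟩
  calc ∫ η, occ η i ∂μ ≤ ∫ _, (1 : ℝ) ∂μ :=
        integral_mono (.of_bound (measurable_occ i).aestronglyMeasurable 1
          (.of_forall fun η => abs_occ_le η i)) (integrable_const 1) fun η => (hbound η).2
    _ = 1 := by simp

theorem every_regular_ETIS_has_density_and_trivial_frozen_mass_general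
    (μ : Measure X) (hμ : ETISF μ) :
    (∃ ρ : ℝ, ρ ∈ Set.Icc (0:ℝ) 1 ∧ densF μ ρ) ∧ (μ frozenF = 0 ∨ μ frozenF = 1) := by
  have : IsProbabilityMeasure μ := hμ.1.1.1
  have hleft_eq_right : ∫ η, occ η (-1) ∂μ = ∫ η, occ η 1 ∂μ := by
    rw [show (-1 : ℤ) = 0 - 1 by norm_num, integral_occ_sub_one hμ.1.1.2,
      show (0 : ℤ) = 1 - 1 by norm_num, integral_occ_sub_one hμ.1.1.2]
  refine ⟨⟨∫ η, occ η 1 ∂μ, integral_occ_mem_Icc μ 1, ?_⟩, hμ.frozenF_eq_zero_or_one⟩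
  filter_upwards [hμ.ae_tendsto_density_right, hμ.ae_tendsto_density_left] with η hright hleft
  exact ⟨hright, hleft_eq_right ▸ hleft⟩

/-- Every regular ETIS state of the F-SSEP has a definite density
`ρ ∈ [0,1]`, and gives the frozen set measure `0` or `1`. -/
theorem every_regular_ETIS_has_density_and_trivial_frozen_mass
    (μ : Measure X) (hreg : RegF μ) (hμ : ETISF μ) :
    (∃ ρ : ℝ, ρ ∈ Set.Icc (0:ℝ) 1 ∧ densF μ ρ) ∧ (μ frozenF = 0 ∨ μ frozenF = 1) :=
  every_regular_ETIS_has_density_and_trivial_frozen_mass_general μ hμ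

end FSSEPPaper
end
end

section
/- (a) A probability measure μ on X̂* is an ETIS state of the SSM if and only if γ^{-1}_*μ is an ETIS state on X̂*_e × S (with the SSM dynamics acting on the first factor and trivially on the second, and the diagonal shift). (b) Every ETIS state μ̃ on X̂*_e × S of density ρ̂ has the form μ̃(dn dσ) = μ_σ(dn) λ(dσ), where λ is an ergodic shift-invariant probability measure on S, the μ_σ are stationary probability measures on X̂*_e satisfying μ_{τσ} = τ_*μ_σ, and, if λ has density κ, then λ-almost every μ_σ has density ρ̂ − κ. -/
open MeasureTheory Filter
open scoped ENNReal

attribute [local instance] Classical.propDecidable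

noncomputable section
/-! `γ` is a bijection from `X̂*_e × S` onto `X̂*` commuting with the shifts and the dynamics: on
`X̂*` the flow across a bond only depends on which stacks are tall, and adding a parity bit does
not change whether an even stack is tall. So `γ⁻¹` pushes the TIS states supported on `X̂*`
affinely and bijectively onto the TIS states of `X̂*_e × S`; as the former are a face of all TIS
states of the SSM, extremality passes through `γ⁻¹`.

For (b), disintegrate `μ̃` over its parity marginal `λ`. By uniqueness of disintegrations, `μ̃` is
TIS exactly when `λ` is shift invariant and `λ`-almost every conditional measure `μ_σ` is
equivariant, stationary and carried by `X̂*_e`. These conditions pass to every `λ' ≪ λ`, so a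
decomposition of `λ` into translation invariant measures lifts, with the same `μ_σ`, to a
decomposition of `μ̃` into TIS states; hence `λ` is ergodic. Densities subtract since `n = m + σ`. -/

open ProbabilityTheory

namespace MeasureTheory.Measure

variable {α β : Type*} [MeasurableSpace α] [MeasurableSpace β]

/-- `ETIS_S`, `ETIS_P` and `ErgF` all unfold to `IsExtremeIn C` for their class `C`. -/
def IsExtremeIn (C : Measure α → Prop) (μ : Measure α) : Prop :=
  C μ ∧ ∀ μ₁ μ₂ : Measure α, C μ₁ → C μ₂ →
    ∀ p : ℝ≥0∞, 0 < p → p < 1 → μ = p • μ₁ + (1 - p) • μ₂ → μ₁ = μ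

lemma absolutelyContinuous_mixture_left {μ₁ μ₂ : Measure α} {p : ℝ≥0∞} (hp : 0 < p) :
    μ₁ ≪ p • μ₁ + (1 - p) • μ₂ :=
  (absolutelyContinuous_smul hp.ne').add_right _

lemma absolutelyContinuous_mixture_right {μ₁ μ₂ : Measure α} {p : ℝ≥0∞} (hp : p < 1) :
    μ₂ ≪ p • μ₁ + (1 - p) • μ₂ :=
  add_comm (p • μ₁) _ ▸ (absolutelyContinuous_smul (tsub_pos_of_lt hp).ne').add_right _

lemma map_mixture {f : α → β} (hf : Measurable f) (μ₁ μ₂ : Measure α) (p q : ℝ≥0∞) :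
    (p • μ₁ + q • μ₂).map f = p • μ₁.map f + q • μ₂.map f := by
  rw [Measure.map_add _ _ hf, Measure.map_smul, Measure.map_smul]

lemma isExtremeIn_iff_and_null {C : Measure α → Prop} {μ : Measure α} {s : Set α}
    (hμ : μ s = 0) : IsExtremeIn C μ ↔ IsExtremeIn (fun ν => C ν ∧ ν s = 0) μ := by
  refine ⟨fun h => ⟨⟨h.1, hμ⟩, fun μ₁ μ₂ h₁ h₂ => h.2 μ₁ μ₂ h₁.1 h₂.1⟩, fun h => ⟨h.1.1, ?_⟩⟩
  intro μ₁ μ₂ h₁ h₂ p hp0 hp1 hmix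
  rw [hmix] at hμ
  exact h.2 μ₁ μ₂ ⟨h₁, absolutelyContinuous_mixture_left hp0 hμ⟩
    ⟨h₂, absolutelyContinuous_mixture_right hp1 hμ⟩ p hp0 hp1 hmix

lemma isExtremeIn_map_iff {C : Measure α → Prop} {D : Measure β → Prop} {f : α → β} {g : β → α}
    (hf : Measurable f) (hg : Measurable g) (hgf : Function.LeftInverse g f)
    (hCD : ∀ μ, C μ → D (μ.map f)) (hDC : ∀ ν, D ν → C (ν.map g))
    (hfg : ∀ ν, D ν → (ν.map g).map f = ν) {μ : Measure α} :
    IsExtremeIn D (μ.map f) ↔ IsExtremeIn C μ := by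
  have hμ (μ : Measure α) : (μ.map f).map g = μ := by
    rw [map_map hg hf, hgf.comp_eq_id, map_id]
  constructor
  · rintro ⟨hD, hext⟩
    refine ⟨hμ μ ▸ hDC _ hD, fun μ₁ μ₂ h₁ h₂ p hp0 hp1 hmix => ?_⟩
    have := hext _ _ (hCD μ₁ h₁) (hCD μ₂ h₂) p hp0 hp1 (by rw [hmix, map_mixture hf])
    rw [← hμ μ₁, this, hμ]
  · rintro ⟨hC, hext⟩
    refine ⟨hCD μ hC, fun ν₁ ν₂ h₁ h₂ p hp0 hp1 hmix => ?_⟩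
    have := hext _ _ (hDC ν₁ h₁) (hDC ν₂ h₂) p hp0 hp1 (by rw [← hμ μ, hmix, map_mixture hg])
    rw [← hfg ν₁ h₁, this]

lemma map_swap_injective : Function.Injective (Measure.map (Prod.swap : α × β → β × α)) :=
  MeasurableEquiv.prodComm.map_measurableEquiv_injective

section Disintegration

variable {l : Measure β} {κ : Kernel β α}

lemma compProd_map_prodMap (e' : β ≃ᵐ β) (e : α ≃ᵐ α) [SFinite l] [IsSFiniteKernel κ] :
    (l ⊗ₘ κ).map (Prod.map e' e) = l.map e' ⊗ₘ (κ.comap e'.symm e'.symm.measurable).map e := by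
  ext s hs
  rw [map_apply (e'.measurable.prodMap e.measurable) hs,
    compProd_apply ((e'.measurable.prodMap e.measurable) hs), compProd_apply hs,
    lintegral_map_equiv]
  refine lintegral_congr fun b => ?_
  rw [Kernel.map_apply _ e.measurable, Kernel.comap_apply, e'.symm_apply_apply,
    map_apply e.measurable (measurable_prodMk_left hs)]
  rfl

lemma compProd_map_prodMap_eq_self_iff [MeasurableSpace.CountableOrCountablyGenerated β α]
    (e' : β ≃ᵐ β) (e : α ≃ᵐ α) [IsProbabilityMeasure l] [IsMarkovKernel κ] :
    (l ⊗ₘ κ).map (Prod.map e' e) = l ⊗ₘ κ ↔ l.map e' = l ∧ ∀ᵐ b ∂l, κ (e' b) = (κ b).map e := by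
  have := Kernel.IsMarkovKernel.map (κ.comap e'.symm e'.symm.measurable) e.measurable
  have hae (hl : l.map e' = l) : (κ.comap e'.symm e'.symm.measurable).map e =ᵐ[l] κ ↔
      ∀ᵐ b ∂l, κ (e' b) = (κ b).map e := by
    conv_lhs => rw [Filter.EventuallyEq, ← hl, e'.measurableEmbedding.ae_map_iff]
    simp only [Kernel.map_apply _ e.measurable, Kernel.comap_apply, e'.symm_apply_apply, eq_comm]
  rw [compProd_map_prodMap]
  refine ⟨fun h => ?_, fun ⟨hl, h⟩ => ?_⟩
  · have hl : l.map e' = l := by simpa using congrArg Measure.fst h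
    rw [hl, Kernel.compProd_eq_iff] at h
    exact ⟨hl, (hae hl).mp h⟩
  · rw [hl]
    exact compProd_congr ((hae hl).mpr h)

lemma parallelComp_comp_compProd_eq_self_iff [MeasurableSpace.CountableOrCountablyGenerated β α]
    [IsFiniteMeasure l] [IsFiniteKernel κ] (Q : Kernel α α) [IsFiniteKernel Q] :
    (Kernel.id ∥ₖ Q) ∘ₘ (l ⊗ₘ κ) = l ⊗ₘ κ ↔ ∀ᵐ b ∂l, Q ∘ₘ κ b = κ b := by
  rw [parallelComp_comp_compProd, Kernel.compProd_eq_iff]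
  simp only [Filter.EventuallyEq, Kernel.comp_apply]

lemma compProd_univ_prod_eq_zero_iff [SFinite l] [IsSFiniteKernel κ] {s : Set α}
    (hs : MeasurableSet s) : (l ⊗ₘ κ) (Set.univ ×ˢ s) = 0 ↔ ∀ᵐ b ∂l, κ b s = 0 := by
  rw [compProd_apply_prod .univ hs, restrict_univ, lintegral_eq_zero_iff (κ.measurable_coe hs)]
  rfl

lemma parallelComp_id_comp_map_swap (ρ : Measure (β × α)) (Q : Kernel α α) [IsSFiniteKernel Q] :
    (Q ∥ₖ Kernel.id) ∘ₘ ρ.map Prod.swap = ((Kernel.id ∥ₖ Q) ∘ₘ ρ).map Prod.swap := by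
  rw [← Measure.deterministic_comp_eq_map measurable_swap,
    ← Measure.deterministic_comp_eq_map measurable_swap, Measure.comp_assoc, Measure.comp_assoc]
  exact congrArg (fun k : Kernel (β × α) (α × β) => k ∘ₘ ρ)
    (Kernel.swap_parallelComp (κ := Kernel.id) (η := Q)).symm

lemma map_swap_compProd_condDistrib [StandardBorelSpace α] [Nonempty α] (μ : Measure (α × β))
    [IsFiniteMeasure μ] : (μ.map Prod.snd ⊗ₘ condDistrib Prod.fst Prod.snd μ).map Prod.swap = μ := by
  rw [compProd_map_condDistrib measurable_fst.aemeasurable,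
    map_map measurable_swap (measurable_snd.prodMk measurable_fst)]
  exact map_id

end Disintegration

end MeasureTheory.Measure

namespace FSSEPPaper

open Measure

-- `shs` and `shf` are `shiftEquiv ℕ` and `shiftEquiv Bool` definitionally.
def shiftEquiv (β : Type*) [MeasurableSpace β] : (ℤ → β) ≃ᵐ (ℤ → β) where
  toFun η i := η (i - 1)
  invFun η i := η (i + 1)
  left_inv η := funext fun i => by simp
  right_inv η := funext fun i => by simp
  measurable_toFun := measurable_pi_lambda _ fun i => measurable_pi_apply _
  measurable_invFun := measurable_pi_lambda _ fun i => measurable_pi_apply _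

lemma flow_congr {n n' : XS} (h : ∀ j, 2 ≤ n j ↔ 2 ≤ n' j) (α : ℤ → Bool) (k : ℤ) :
    flow n α k = flow n' α k := by
  simp only [flow, h]

lemma flow_eq_one_or_neg_one {n : XS} (hn : n ∈ XstarS) (α : ℤ → Bool) (k : ℤ) :
    flow n α k = 1 ∨ flow n α k = -1 := by
  have := hn k
  unfold flow
  split_ifs <;> omega

-- A short stack in `X̂*` has two tall neighbours, so the truncation in `sstep` never acts.
lemma sstep_cast {n : XS} (hn : n ∈ XstarS) (α : ℤ → Bool) (i : ℤ) :
    (sstep n α i : ℤ) = n i + flow n α (i - 1) - flow n α i := by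
  have h₁ := hn (i - 1)
  have h₂ := hn i
  rw [sub_add_cancel] at h₁
  unfold sstep flow
  rw [sub_add_cancel]
  split_ifs <;> omega

lemma sstep_mod_two {n : XS} (hn : n ∈ XstarS) (α : ℤ → Bool) (i : ℤ) :
    sstep n α i % 2 = n i % 2 := by
  have h := sstep_cast hn α i
  rcases flow_eq_one_or_neg_one hn α (i - 1) with h₁ | h₁ <;>
    rcases flow_eq_one_or_neg_one hn α i with h₂ | h₂ <;> omega

lemma mem_XstarS_of_le {m n : XS} (hm : m ∈ XeS) (hmn : m ≤ n) : n ∈ XstarS := by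
  intro i ⟨h₁, h₂⟩
  have e₁ := Nat.even_iff.mp (hm.1 i)
  have e₂ := Nat.even_iff.mp (hm.1 (i + 1))
  have l₁ : m i ≤ n i := hmn i
  have l₂ : m (i + 1) ≤ n (i + 1) := hmn (i + 1)
  exact hm.2 i ⟨by omega, by omega⟩

lemma gam_apply (p : XS × PS) (i : ℤ) : gam p i = p.1 i + if p.2 i then 1 else 0 := rfl

lemma gam_gamInv (n : XS) : gam (gamInv n) = n := by
  funext i
  simp only [gam_apply, gamInv]
  split_ifs with h <;> simp at h <;> omega

lemma gamInv_gam {p : XS × PS} (hp : ∀ i, Even (p.1 i)) : gamInv (gam p) = p := by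
  refine Prod.ext (funext fun i => ?_) (funext fun i => ?_) <;>
    have := Nat.even_iff.mp (hp i) <;> cases h : p.2 i <;> simp [gamInv, gam_apply, h] <;> omega

lemma gamInv_fst_mem_XeS {n : XS} (hn : n ∈ XstarS) : (gamInv n).1 ∈ XeS :=
  ⟨fun i => Nat.even_iff.mpr (by simp only [gamInv]; omega),
    fun i ⟨h₁, h₂⟩ => hn i ⟨by simp only [gamInv] at h₁; omega, by simp only [gamInv] at h₂; omega⟩⟩

lemma gam_mem_XstarS {p : XS × PS} (hp : p.1 ∈ XeS) : gam p ∈ XstarS :=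
  mem_XstarS_of_le hp fun _ => Nat.le_add_right _ _

lemma sstep_gam {p : XS × PS} (hp : p.1 ∈ XeS) (α : ℤ → Bool) :
    sstep (gam p) α = gam (sstep p.1 α, p.2) := by
  have hflow (k : ℤ) : flow (gam p) α k = flow p.1 α k := flow_congr (fun j => by
    have := Nat.even_iff.mp (hp.1 j)
    rw [gam_apply]
    split_ifs <;> omega) α k
  funext i
  have e₁ := sstep_cast (gam_mem_XstarS hp) α i
  have e₂ := sstep_cast (mem_XstarS_of_le hp le_rfl) α i
  rw [hflow, hflow, gam_apply] at e₁
  rw [gam_apply]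
  dsimp only
  split_ifs at e₁ ⊢ <;> push_cast at e₁ <;> omega

lemma measurable_flow (k : ℤ) : Measurable fun q : XS × (ℤ → Bool) => flow q.1 q.2 k := by
  refine Measurable.ite ?_ (Measurable.ite ?_ (Measurable.ite ?_ measurable_const measurable_const)
    measurable_const) (Measurable.ite ?_ measurable_const measurable_const) <;> measurability

lemma measurable_sstep_uncurry : Measurable fun q : XS × (ℤ → Bool) => sstep q.1 q.2 :=
  measurable_pi_lambda _ fun i => Measurable.of_discrete.comp <|
    ((Measurable.of_discrete.comp (by fun_prop)).add (measurable_flow _)).sub (measurable_flow _)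

lemma measurable_sstep (n : XS) : Measurable (sstep n) :=
  measurable_sstep_uncurry.comp measurable_prodMk_left

lemma measurable_gam : Measurable gam :=
  measurable_pi_lambda _ fun i => ((measurable_pi_apply i).comp measurable_fst).add
    (Measurable.of_discrete.comp (g := fun b : Bool => if b then 1 else 0)
      ((measurable_pi_apply i).comp measurable_snd))

lemma measurable_gamInv : Measurable gamInv :=
  .prodMk
    (measurable_pi_lambda _ fun i =>
      Measurable.of_discrete.comp (g := fun k : ℕ => k - k % 2) (measurable_pi_apply i))
    (measurable_pi_lambda _ fun i =>
      Measurable.of_discrete.comp (g := fun k : ℕ => decide (k % 2 = 1)) (measurable_pi_apply i))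

lemma measurable_shs : Measurable shs := (shiftEquiv ℕ).measurable

lemma measurable_shP : Measurable shP :=
  (shiftEquiv ℕ).measurable.prodMap (shiftEquiv Bool).measurable

lemma measurableSet_XeS : MeasurableSet XeS := by
  unfold XeS; measurability

lemma measurableSet_XstarS : MeasurableSet XstarS := by
  unfold XstarS; measurability

instance inst_s14 : IsProbabilityMeasure coin := by
  have : IsProbabilityMeasure (volume.restrict (Set.Ioo (0:ℝ) 1)) := ⟨by simp⟩
  refine isProbabilityMeasure_map (Measurable.aemeasurable ?_)
  exact measurable_pi_lambda _ fun i => Measurable.of_discrete.comp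
    (g := fun z : ℤ => decide (z % 2 = 1)) (Int.measurable_floor.comp (measurable_id.mul_const _))

-- Writing `QS` as a push-forward of `Kernel.id ×ₖ Kernel.const XS coin` gives measurability.
def QSK : Kernel XS XS :=
  (Kernel.id ×ₖ Kernel.const XS coin).map fun q => sstep q.1 q.2

instance : IsMarkovKernel QSK := Kernel.IsMarkovKernel.map _ measurable_sstep_uncurry

lemma coe_QSK : ⇑QSK = QS := by
  funext n
  rw [QSK, Kernel.map_apply _ measurable_sstep_uncurry, Kernel.prod_apply, Kernel.id_apply,
    Kernel.const_apply, dirac_prod, map_map measurable_sstep_uncurry measurable_prodMk_left]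
  rfl

def QPK : Kernel (XS × PS) (XS × PS) := QSK ∥ₖ Kernel.id

lemma coe_QPK : ⇑QPK = QP := by
  funext p
  rw [QPK, Kernel.parallelComp_apply, Kernel.id_apply, prod_dirac, coe_QSK]
  rfl

lemma QS_gam {p : XS × PS} (hp : p.1 ∈ XeS) : QS (gam p) = (QP p).map gam := by
  rw [QS, QP, QS, map_map measurable_prodMk_right (measurable_sstep _),
    map_map measurable_gam (measurable_prodMk_right.comp (measurable_sstep _))]
  exact congrArg coin.map (funext (sstep_gam hp))

lemma map_gam_bind_QP {ν : Measure (XS × PS)} (hν : ∀ᵐ p ∂ν, p.1 ∈ XeS) :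
    (ν.bind QP).map gam = (ν.map gam).bind QS := by
  rw [← coe_QPK, ← coe_QSK, map_comp _ _ measurable_gam,
    ← deterministic_comp_eq_map measurable_gam, comp_assoc, Kernel.comp_deterministic_eq_comap]
  refine comp_congr (hν.mono fun p hp => ?_)
  rw [Kernel.map_apply _ measurable_gam, Kernel.comap_apply, coe_QPK, coe_QSK, QS_gam hp]

lemma ae_even_bind_QP {ν : Measure (XS × PS)} (hν : ∀ᵐ p ∂ν, p.1 ∈ XeS) :
    ∀ᵐ p ∂ν.bind QP, ∀ i, Even (p.1 i) := by
  rw [← coe_QPK]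
  refine ae_comp_of_ae_ae (by measurability) (hν.mono fun p hp => ?_)
  rw [coe_QPK, QP, QS, map_map measurable_prodMk_right (measurable_sstep _),
    ae_map_iff (measurable_prodMk_right.comp (measurable_sstep _)).aemeasurable (by measurability)]
  refine ae_of_all _ fun α i => Nat.even_iff.mpr ?_
  exact (sstep_mod_two (mem_XstarS_of_le hp le_rfl) α i).trans (Nat.even_iff.mp (hp.1 i))

lemma map_gam_map_gamInv {ν : Measure (XS × PS)} (hν : ∀ᵐ p ∂ν, ∀ i, Even (p.1 i)) :
    (ν.map gam).map gamInv = ν := by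
  rw [map_map measurable_gamInv measurable_gam,
    Measure.map_congr (f := gamInv ∘ gam) (g := id) (hν.mono fun _ hp => gamInv_gam hp),
    Measure.map_id]

lemma TIS_P_map_gamInv {μ : Measure XS} (h : TIS_S μ) (hμ : μ XstarSᶜ = 0) :
    TIS_P (μ.map gamInv) := by
  obtain ⟨⟨hprob, hshift⟩, hstat⟩ := h
  have hXe : ∀ᵐ p ∂μ.map gamInv, p.1 ∈ XeS :=
    (ae_map_iff measurable_gamInv.aemeasurable (measurable_fst measurableSet_XeS)).mpr
      ((ae_iff.mpr hμ : ∀ᵐ n ∂μ, n ∈ XstarS).mono fun _ hn => gamInv_fst_mem_XeS hn)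
  have hgam : (μ.map gamInv).map gam = μ := by
    rw [map_map measurable_gam measurable_gamInv, show gam ∘ gamInv = id from funext gam_gamInv,
      Measure.map_id]
  refine ⟨isProbabilityMeasure_map measurable_gamInv.aemeasurable, ?_, ?_, ae_iff.mp hXe⟩
  · rw [map_map measurable_shP measurable_gamInv, show shP ∘ gamInv = gamInv ∘ shs from rfl,
      ← map_map measurable_gamInv measurable_shs, hshift]
  · rw [← map_gam_map_gamInv (ae_even_bind_QP hXe), map_gam_bind_QP hXe, hgam, hstat]

lemma TIS_S_map_gam {ν : Measure (XS × PS)} (h : TIS_P ν) :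
    TIS_S (ν.map gam) ∧ ν.map gam XstarSᶜ = 0 := by
  obtain ⟨hprob, hshift, hstat, hXe⟩ := h
  refine ⟨⟨⟨isProbabilityMeasure_map measurable_gam.aemeasurable, ?_⟩, ?_⟩, ?_⟩
  · rw [map_map measurable_shs measurable_gam, show shs ∘ gam = gam ∘ shP from rfl,
      ← map_map measurable_gam measurable_shP, hshift]
  · rw [← map_gam_bind_QP (ae_iff.mpr hXe), hstat]
  · rw [map_apply measurable_gam measurableSet_XstarS.compl]
    exact measure_mono_null (fun p hp hp₁ => hp (gam_mem_XstarS hp₁)) hXe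

theorem ETIS_S_iff_ETIS_P_map_gamInv {μ : Measure XS} (hμ : μ XstarSᶜ = 0) :
    ETIS_S μ ↔ ETIS_P (μ.map gamInv) :=
  (isExtremeIn_iff_and_null hμ).trans <| (isExtremeIn_map_iff measurable_gamInv measurable_gam
    gam_gamInv (fun _ h => TIS_P_map_gamInv h.1 h.2) (fun _ => TIS_S_map_gam)
    fun _ h => map_gam_map_gamInv ((ae_iff.mpr h.2.2.2).mono fun _ hp => hp.1)).symm

-- `densS μ c` and `densF μ c` unfold to `∀ᵐ x ∂μ, CesaroTendsto _ c`.
def CesaroTendsto (f : ℤ → ℝ) (c : ℝ) : Prop :=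
  Tendsto (fun N : ℕ => (∑ i ∈ Finset.range N, f ((i : ℤ) + 1)) / (N : ℝ)) atTop (nhds c) ∧
    Tendsto (fun N : ℕ => (∑ i ∈ Finset.range N, f (-(i : ℤ) - 1)) / (N : ℝ)) atTop (nhds c)

lemma CesaroTendsto.sub {f g : ℤ → ℝ} {a b : ℝ} (hf : CesaroTendsto f a)
    (hg : CesaroTendsto g b) : CesaroTendsto (f - g) (a - b) :=
  ⟨(hf.1.sub hg.1).congr fun N => by simp [Finset.sum_sub_distrib, sub_div],
    (hf.2.sub hg.2).congr fun N => by simp [Finset.sum_sub_distrib, sub_div]⟩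

lemma ae_cesaroTendsto_fst {μt : Measure (XS × PS)} {ρ κ : ℝ} (hρ : densS (μt.map gam) ρ)
    (hκ : densF (μt.map Prod.snd) κ) :
    ∀ᵐ p ∂μt, CesaroTendsto (fun i => (p.1 i : ℝ)) (ρ - κ) := by
  filter_upwards [ae_of_ae_map measurable_gam.aemeasurable hρ,
    ae_of_ae_map measurable_snd.aemeasurable hκ] with p h₁ h₂
  have h₁ : CesaroTendsto (fun i => (gam p i : ℝ)) ρ := h₁
  have h₂ : CesaroTendsto (fun i => if p.2 i then 1 else 0) κ := h₂
  convert h₁.sub h₂ using 1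
  funext i
  simp only [gam_apply, Pi.sub_apply]
  split_ifs <;> simp

lemma map_shP_map_swap (ρ : Measure (PS × XS)) :
    (ρ.map Prod.swap).map shP =
      (ρ.map (Prod.map (shiftEquiv Bool) (shiftEquiv ℕ))).map Prod.swap := by
  rw [map_map measurable_shP measurable_swap,
    map_map measurable_swap ((shiftEquiv Bool).measurable.prodMap (shiftEquiv ℕ).measurable)]
  rfl

lemma TIS_P_map_swap_compProd_iff (l : Measure PS) [IsProbabilityMeasure l] (κ : Kernel PS XS)
    [IsMarkovKernel κ] :
    TIS_P ((l ⊗ₘ κ).map Prod.swap) ↔ l.map shf = l ∧ (∀ᵐ σ ∂l, κ (shf σ) = (κ σ).map shs) ∧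
      (∀ᵐ σ ∂l, (κ σ).bind QS = κ σ) ∧ ∀ᵐ σ ∂l, κ σ XeSᶜ = 0 := by
  have hprob : IsProbabilityMeasure ((l ⊗ₘ κ).map Prod.swap) :=
    isProbabilityMeasure_map measurable_swap.aemeasurable
  have hXe : MeasurableSet {p : XS × PS | p.1 ∉ XeS} := measurable_fst measurableSet_XeS.compl
  have hsupp : Prod.swap ⁻¹' {p : XS × PS | p.1 ∉ XeS} = Set.univ ×ˢ XeSᶜ := by ext; simp
  rw [TIS_P, map_shP_map_swap, map_swap_injective.eq_iff, compProd_map_prodMap_eq_self_iff,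
    ← coe_QPK, QPK, parallelComp_id_comp_map_swap, map_swap_injective.eq_iff,
    parallelComp_comp_compProd_eq_self_iff, map_apply measurable_swap hXe, hsupp,
    compProd_univ_prod_eq_zero_iff measurableSet_XeS.compl, coe_QSK]
  simp only [hprob, true_and, and_assoc]
  rfl

lemma ErgF_of_ETIS_P {l : Measure PS} [IsProbabilityMeasure l] {κ : Kernel PS XS}
    [IsMarkovKernel κ] (h : ETIS_P ((l ⊗ₘ κ).map Prod.swap)) : ErgF l := by
  obtain ⟨hshift, hequiv, hstat, hsupp⟩ := (TIS_P_map_swap_compProd_iff l κ).mp h.1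
  have hlift (l' : Measure PS) (hl' : TIF l') (hac : l' ≪ l) :
      TIS_P ((l' ⊗ₘ κ).map Prod.swap) := by
    have := hl'.1
    exact (TIS_P_map_swap_compProd_iff l' κ).mpr
      ⟨hl'.2, hac.ae_le hequiv, hac.ae_le hstat, hac.ae_le hsupp⟩
  have hmarg (l' : Measure PS) [SFinite l'] : ((l' ⊗ₘ κ).map Prod.swap).map Prod.snd = l' := by
    rw [map_map measurable_snd measurable_swap]
    exact fst_compProd l' κ
  refine ⟨⟨inferInstance, hshift⟩, fun l₁ l₂ h₁ h₂ p hp0 hp1 hmix => ?_⟩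
  have := h₁.1
  have := h₂.1
  have hmix' : (l ⊗ₘ κ).map Prod.swap =
      p • (l₁ ⊗ₘ κ).map Prod.swap + (1 - p) • (l₂ ⊗ₘ κ).map Prod.swap := by
    rw [hmix, compProd_add_left, compProd_smul_left, compProd_smul_left, map_mixture measurable_swap]
  have hac₁ : l₁ ≪ l := hmix ▸ absolutelyContinuous_mixture_left hp0
  have hac₂ : l₂ ≪ l := hmix ▸ absolutelyContinuous_mixture_right hp1
  rw [← hmarg l₁, h.2 _ _ (hlift l₁ h₁ hac₁) (hlift l₂ h₂ hac₂) p hp0 hp1 hmix', hmarg]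

/-- (a) `μ` on `X̂*` is an ETIS state of the SSM iff `γ⁻¹_* μ` is an
ETIS state on `X̂*_e × S`.  (b) Every ETIS state `μ̃` on `X̂*_e × S` of density `ρ̂`
disintegrates as `μ̃(dn dσ) = μ_σ(dn) λ(dσ)` with `λ` ergodic TI, the `μ_σ` stationary,
equivariant (`μ_{τσ} = τ_* μ_σ`), and of density `ρ̂ - κ` when `λ` has density `κ`. -/
theorem parity_decomposition_of_ETIS :
    (∀ μ : Measure XS, μ XstarSᶜ = 0 → (ETIS_S μ ↔ ETIS_P (μ.map gamInv))) ∧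
    (∀ (μt : Measure (XS × PS)) (ρ : ℝ), ETIS_P μt → densS (μt.map gam) ρ →
      ∃ (lam : Measure PS) (μσ : PS → Measure XS),
        ErgF lam ∧ lam = μt.map Prod.snd ∧
        (∀ A : Set XS, MeasurableSet A → ∀ B : Set PS, MeasurableSet B →
          μt (A ×ˢ B) = ∫⁻ σ in B, μσ σ A ∂lam) ∧
        (∀ᵐ σ ∂lam, IsProbabilityMeasure (μσ σ) ∧ (μσ σ).bind QS = μσ σ ∧ (μσ σ) XeSᶜ = 0) ∧
        (∀ᵐ σ ∂lam, μσ (shf σ) = (μσ σ).map shs) ∧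
        (∀ κ : ℝ, densF lam κ → ∀ᵐ σ ∂lam, densS (μσ σ) (ρ - κ))) := by
  refine ⟨fun _ => ETIS_S_iff_ETIS_P_map_gamInv, fun μt ρ hE hρ => ?_⟩
  have := hE.1.1
  set lam := μt.map Prod.snd
  have : IsProbabilityMeasure lam := isProbabilityMeasure_map measurable_snd.aemeasurable
  set κ := condDistrib Prod.fst Prod.snd μt
  have hμt : μt = (lam ⊗ₘ κ).map Prod.swap := (map_swap_compProd_condDistrib μt).symm
  rw [hμt] at hE
  obtain ⟨-, hequiv, hstat, hsupp⟩ := (TIS_P_map_swap_compProd_iff lam κ).mp hE.1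
  refine ⟨lam, κ, ErgF_of_ETIS_P hE, rfl, fun A hA B hB => ?_,
    (hstat.and hsupp).mono fun σ h => ⟨inferInstance, h⟩, hequiv, fun κ₀ hκ₀ => ?_⟩
  · rw [hμt, map_apply measurable_swap (hA.prod hB), Set.preimage_swap_prod,
      compProd_apply_prod hB hA]
  · have hfst := ae_cesaroTendsto_fst hρ hκ₀
    rw [hμt] at hfst
    exact ae_ae_of_ae_compProd (ae_of_ae_map measurable_swap.aemeasurable hfst)

end FSSEPPaper
end
end
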